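/- Let C be a symmetric unitary matrix with C = S Sᵀ for a unitary S, and let Γ: G → U(d) be a representation satisfying conj(Γ(g)) = conj(C) Γ(g) C for all g. Then S^H Γ(g) S is real for all g ∈ G. -/

import Mathlib

open Matrix

namespace Matrix

variable {R : Type*} [CommSemiring R] [StarRing R]

theorem conjTranspose_map_starRingEnd {m n : Type*} (S : Matrix m n R) :
    Sᴴ.map (starRingEnd R) = Sᵀ := by
  ext i j; simp [starRingEnd_apply]

theorem transpose_map_starRingEnd {m n : Type*} (S : Matrix m n R) :
    Sᵀ.map (starRingEnd R) = Sᴴ := by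
  ext i j; simp [starRingEnd_apply]

variable {n : Type*} [Fintype n] [DecidableEq n]

theorem transpose_mul_map_starRingEnd_of_conjTranspose_mul_self {S : Matrix n n R}
    (hS : Sᴴ * S = 1) : Sᵀ * S.map (starRingEnd R) = 1 := by
  simpa [Matrix.map_mul, conjTranspose_map_starRingEnd] using
    congrArg (map · (starRingEnd R)) hS

/- With `C = S Sᵀ`, conjugating `Sᴴ A S` gives `(Sᵀ conj S) Sᴴ A S (Sᵀ conj S)`, and both outer
factors are the conjugate of `Sᴴ S = 1`. -/
theorem map_starRingEnd_conjTranspose_mul_mul_self {S A : Matrix n n R} (hS : Sᴴ * S = 1)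
    (hA : A.map (starRingEnd R) = (S * Sᵀ).map (starRingEnd R) * A * (S * Sᵀ)) :
    (Sᴴ * A * S).map (starRingEnd R) = Sᴴ * A * S := by
  have hS' := transpose_mul_map_starRingEnd_of_conjTranspose_mul_self hS
  calc (Sᴴ * A * S).map (starRingEnd R)
      = Sᵀ * (S.map (starRingEnd R) * Sᴴ * A * (S * Sᵀ)) * S.map (starRingEnd R) := by
        rw [Matrix.map_mul, Matrix.map_mul, hA, Matrix.map_mul, conjTranspose_map_starRingEnd,
          transpose_map_starRingEnd]
    _ = (Sᵀ * S.map (starRingEnd R)) * Sᴴ * A * S * (Sᵀ * S.map (starRingEnd R)) := by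
        simp only [Matrix.mul_assoc]
    _ = Sᴴ * A * S := by rw [hS', Matrix.one_mul, Matrix.mul_one]

end Matrix

theorem stmt12_general {G : Type*} [Group G] {d : ℕ}
    (Γ : G →* Matrix.unitaryGroup (Fin d) ℂ)
    (C S : Matrix (Fin d) (Fin d) ℂ)
    (hSunit : Sᴴ * S = 1) (hCS : C = S * Sᵀ)
    (hrel : ∀ g : G, ((Γ g : Matrix (Fin d) (Fin d) ℂ)).map (starRingEnd ℂ) =
      C.map (starRingEnd ℂ) * (Γ g : Matrix (Fin d) (Fin d) ℂ) * C) :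
    ∀ g : G, ∀ i j : Fin d,
      ((Sᴴ * (Γ g : Matrix (Fin d) (Fin d) ℂ) * S) i j).im = 0 := by
  intro g i j
  subst hCS
  have hreal := map_starRingEnd_conjTranspose_mul_mul_self hSunit (hrel g)
  exact Complex.conj_eq_iff_im.mp (congrFun (congrFun hreal i) j)

/-- If `C` is symmetric unitary with `C = S Sᵀ` for a unitary `S`, and the unitary
representation `Γ` satisfies `conj(Γ(g)) = conj(C) Γ(g) C` for all `g`, then
`Sᴴ Γ(g) S` has real entries for all `g`. -/
theorem stmt12 {G : Type*} [Group G] {d : ℕ}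
    (Γ : G →* Matrix.unitaryGroup (Fin d) ℂ)
    (C S : Matrix (Fin d) (Fin d) ℂ)
    (hCsym : Cᵀ = C) (hCunit : Cᴴ * C = 1)
    (hSunit : Sᴴ * S = 1) (hCS : C = S * Sᵀ)
    (hrel : ∀ g : G, ((Γ g : Matrix (Fin d) (Fin d) ℂ)).map (starRingEnd ℂ) =
      C.map (starRingEnd ℂ) * (Γ g : Matrix (Fin d) (Fin d) ℂ) * C) :
    ∀ g : G, ∀ i j : Fin d,
      ((Sᴴ * (Γ g : Matrix (Fin d) (Fin d) ℂ) * S) i j).im = 0 :=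
  stmt12_general Γ C S hSunit hCS hrel
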